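/- Let a = 7/8, b = 4/5, μ = 7/30, δ > 0, and E > E*r(δ). Then the Jacobian J(2, θ_Nr) satisfies trace(J(2, θ_Nr)) = −1 < 0 and det(J(2, θ_Nr)) = 2δ·√(R_δ² − G(2)²) > 0, and its discriminant satisfies trace² − 4·det = 1 − 8δ·√(R_δ² − G(2)²). Moreover, 1 − 8δ·√(R_δ² − G(2)²) > 0 (folded node) if and only if E < E**r(δ) := √( (E*r(δ))² + 1/(64·δ²·(b² + δ²)) ), and 1 − 8δ·√(R_δ² − G(2)²) < 0 (folded focus) if and only if E > E**r(δ). -/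

import Mathlib

open Real Matrix

/-!
Since `θ_Nr - φ = arccos (G(2)/R)`, the off-diagonal entry `R sin (θ_Nr - φ)` equals
`√(R² - G(2)²)`, which is positive exactly because `E > E*r(δ)` means `R > G(2)`. The sign of the
discriminant `1 - 8δ√(R² - G(2)²)` is that of `1/(64δ²) - (R² - G(2)²)`, and with
`R² = E²(b² + δ²)` this is a comparison of `E` with `E**r(δ)`.
-/

lemma Real.mul_sin_arccos_div {R : ℝ} (c : ℝ) (hR : 0 ≤ R) :
    R * sin (arccos (c / R)) = √(R ^ 2 - c ^ 2) := by
  rcases hR.eq_or_lt with rfl | hR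
  · simp [sqrt_eq_zero_of_nonpos (neg_nonpos.2 (sq_nonneg c))]
  rw [sin_arccos, ← sqrt_sq hR.le, ← sqrt_mul (sq_nonneg _), sqrt_sq hR.le]
  congr 1
  field_simp

section Threshold

variable {k X E s c t : ℝ}

lemma one_sub_mul_sqrt_pos_iff (hk : 0 < k) : 0 < 1 - k * √X ↔ X < 1 / k ^ 2 := by
  rw [sub_pos, ← lt_div_iff₀' hk, sqrt_lt' (by positivity), div_pow, one_pow]

lemma one_sub_mul_sqrt_neg_iff (hk : 0 < k) : 1 - k * √X < 0 ↔ 1 / k ^ 2 < X := by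
  rw [sub_neg, ← div_lt_iff₀' hk, lt_sqrt (by positivity), div_pow, one_pow]

lemma lt_sqrt_div_sqrt_sq_add_div_iff (hE : 0 ≤ E) (hs : 0 < s) :
    E < √((c / √s) ^ 2 + t / s) ↔ (E * √s) ^ 2 - c ^ 2 < t := by
  rw [lt_sqrt hE, div_pow, sq_sqrt hs.le, ← add_div, lt_div_iff₀ hs, mul_pow, sq_sqrt hs.le,
    sub_lt_iff_lt_add']

lemma sqrt_div_sqrt_sq_add_div_lt_iff (hE : 0 < E) (hs : 0 < s) :
    √((c / √s) ^ 2 + t / s) < E ↔ t < (E * √s) ^ 2 - c ^ 2 := by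
  rw [sqrt_lt' hE, div_pow, sq_sqrt hs.le, ← add_div, div_lt_iff₀ hs, mul_pow,
    sq_sqrt hs.le, lt_sub_iff_add_lt']

end Threshold

theorem stmt_6_general (b δ E R φ θNr : ℝ)
    (hδ : 0 < δ) (hE : 0 < E)
    (hR : R = E * Real.sqrt (b^2 + δ^2))
    (hEr : E > (7/6) / Real.sqrt (b^2 + δ^2))
    (hθN : θNr = φ + Real.arccos ((7/6) / R)) :
    let J : Matrix (Fin 2) (Fin 2) ℝ :=
      !![-1, -(R * Real.sin (θNr - φ)); 2*δ*(2 - 1), 0]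
    Matrix.trace J = -1 ∧ Matrix.trace J < 0 ∧
    J.det = 2*δ*Real.sqrt (R^2 - (7/6)^2) ∧ 0 < J.det ∧
    (Matrix.trace J)^2 - 4 * J.det = 1 - 8*δ*Real.sqrt (R^2 - (7/6)^2) ∧
    (1 - 8*δ*Real.sqrt (R^2 - (7/6)^2) > 0 ↔
      E < Real.sqrt (((7/6) / Real.sqrt (b^2 + δ^2))^2 + 1/(64*δ^2*(b^2 + δ^2)))) ∧
    (1 - 8*δ*Real.sqrt (R^2 - (7/6)^2) < 0 ↔
      E > Real.sqrt (((7/6) / Real.sqrt (b^2 + δ^2))^2 + 1/(64*δ^2*(b^2 + δ^2)))) := by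
  intro J
  have hs : 0 < b ^ 2 + δ ^ 2 := by positivity
  have hR_gt : 7 / 6 < R := hR ▸ (div_lt_iff₀ (sqrt_pos.2 hs)).1 hEr
  have htr : trace J = -1 := by simp [J, trace_fin_two_of]
  have hdet : J.det = 2 * δ * √(R ^ 2 - (7 / 6) ^ 2) := by
    rw [← mul_sin_arccos_div _ (by linarith)]
    simp only [J, det_fin_two_of, hθN, add_sub_cancel_left]
    ring
  have hthreshold : 1 / (64 * δ ^ 2 * (b ^ 2 + δ ^ 2)) = 1 / (8 * δ) ^ 2 / (b ^ 2 + δ ^ 2) := by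
    field_simp
    ring
  refine ⟨htr, by norm_num [htr], hdet, ?_, by rw [htr, hdet]; ring, ?_, ?_⟩
  · rw [hdet]
    exact mul_pos (by positivity) (sqrt_pos.2 (by nlinarith))
  · rw [gt_iff_lt, one_sub_mul_sqrt_pos_iff (by positivity), hthreshold,
      lt_sqrt_div_sqrt_sq_add_div_iff hE.le hs, hR]
  · rw [one_sub_mul_sqrt_neg_iff (by positivity), hthreshold, gt_iff_lt,
      sqrt_div_sqrt_sq_add_div_lt_iff hE hs, hR]

/-- For `a = 7/8`, `b = 4/5`, `μ = 7/30`, `δ > 0`, `E > E*r(δ)`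
(with `G(2) = 7/6`): the Jacobian `J(2, θ_Nr)` with `θ_Nr = φ + arccos(G(2)/R)`
has trace `−1 < 0`, determinant `2δ√(R² − G(2)²) > 0`, discriminant
`trace² − 4 det = 1 − 8δ√(R² − G(2)²)`, and this is positive (folded node) iff
`E < E**r(δ) = √((E*r(δ))² + 1/(64δ²(b² + δ²)))`, and negative (folded focus)
iff `E > E**r(δ)`. -/
theorem stmt_6 (a b μ δ E R φ θNr : ℝ)
    (ha : a = 7/8) (hb : b = 4/5) (hμ : μ = 7/30)
    (hδ : 0 < δ) (hE : 0 < E)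
    (hR : R = E * Real.sqrt (b^2 + δ^2))
    (hφ : φ = Real.arctan (b / δ))
    (hEr : E > (7/6) / Real.sqrt (b^2 + δ^2))
    (hθN : θNr = φ + Real.arccos ((7/6) / R)) :
    let J : Matrix (Fin 2) (Fin 2) ℝ :=
      !![-1, -(R * Real.sin (θNr - φ)); 2*δ*(2 - 1), 0]
    Matrix.trace J = -1 ∧ Matrix.trace J < 0 ∧
    J.det = 2*δ*Real.sqrt (R^2 - (7/6)^2) ∧ 0 < J.det ∧
    (Matrix.trace J)^2 - 4 * J.det = 1 - 8*δ*Real.sqrt (R^2 - (7/6)^2) ∧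
    (1 - 8*δ*Real.sqrt (R^2 - (7/6)^2) > 0 ↔
      E < Real.sqrt (((7/6) / Real.sqrt (b^2 + δ^2))^2 + 1/(64*δ^2*(b^2 + δ^2)))) ∧
    (1 - 8*δ*Real.sqrt (R^2 - (7/6)^2) < 0 ↔
      E > Real.sqrt (((7/6) / Real.sqrt (b^2 + δ^2))^2 + 1/(64*δ^2*(b^2 + δ^2)))) :=
  stmt_6_general b δ E R φ θNr hδ hE hR hEr hθN
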